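/- Let k be a field of characteristic 2, r ≥ 1, and consider S = k[x_1,…,x_r,A]/(x_1+⋯+x_r) with the action of E_r = (Z/2)^r where ε_i fixes each x_m and sends A to A − x_i. Then the product ε_1⋯ε_r acts as the identity on S, and the ring of E_r-invariants equals the ring of E_{r−1}-invariants, namely k[x_1,…,x_r, η_{r−1}]/(x_1+⋯+x_r), where η_{r−1} = ∏_{I ⊆ {1,…,r−1}} (A − ∑_{i∈I} x_i). -/

import Mathlib

open MvPolynomial Finset

open scoped Polynomial symmDiff
open Lagrange

/-!
Eliminating `x_r = -(x_1 + ⋯ + x_{r-1})` identifies `S` with `R[A]`, `R = k[x_1, …, x_{r-1}]`,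
and turns `ε_i` into a translation of `A`: by `x_i` for `i < r` (characteristic 2) and by
`x_1 + ⋯ + x_{r-1}` for `i = r`. So both invariant rings are the polynomials fixed by the
translations by the finite additive subgroup `V ⊆ R` of subset sums of `x_1, …, x_{r-1}`.
The product `η = ∏_{v ∈ V} (A - v)` is fixed since translation by `v ∈ V` permutes `V`.
Conversely, dividing an invariant `f` by the monic `η`, uniqueness of division makes quotient
and remainder invariant; the remainder has degree `< |V|` and takes the same value at every
point of `V`, hence is constant, and induction on the degree puts `f` in `R[η]`.
-/

theorem CharTwo.sum_symmDiff {ι R : Type*} [Ring R] [CharP R 2] [DecidableEq ι]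
    (s t : Finset ι) (f : ι → R) :
    ∑ i ∈ s ∆ t, f i = ∑ i ∈ s, f i + ∑ i ∈ t, f i := by
  rw [symmDiff_eq_sup_sdiff_inf, sup_eq_union, inf_eq_inter,
    sum_sdiff_eq_sub inter_subset_union, ← sum_union_inter, CharTwo.sub_eq_add]

namespace Polynomial

variable {R : Type*} [CommRing R]

theorem taylor_divByMonic_and_modByMonic [Nontrivial R] {p : R[X]} (hp : p.Monic) (r : R)
    (f : R[X]) :
    taylor r (f /ₘ p) = taylor r f /ₘ taylor r p ∧
      taylor r (f %ₘ p) = taylor r f %ₘ taylor r p := by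
  have hp' : (taylor r p).Monic := by rw [Monic, leadingCoeff_taylor]; exact hp
  have h := div_modByMonic_unique (f := taylor r f) _ _ hp'
    ⟨by rw [← taylor_mul, ← map_add, modByMonic_add_div],
      by rw [degree_taylor, degree_taylor]; exact degree_modByMonic_lt f hp⟩
  exact ⟨h.1.symm, h.2.symm⟩

theorem taylor_sum_eq_self {ι : Type*} {s : Finset ι} {a : ι → R} {f : R[X]}
    (h : ∀ i ∈ s, taylor (a i) f = f) : taylor (∑ i ∈ s, a i) f = f :=
  Finset.sum_induction a (fun r => taylor r f = f)
    (fun r t hr ht => by rw [← taylor_taylor, ht, hr]) (taylor_zero f) h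

section Translations

variable {V : Finset R}

theorem taylor_nodal_id_of_mem (hV : ∀ u ∈ V, ∀ v ∈ V, u - v ∈ V) {v : R} (hv : v ∈ V) :
    taylor v (nodal V id) = nodal V id := by
  have h0 : (0 : R) ∈ V := by simpa using hV v hv v hv
  have hneg : -v ∈ V := by simpa using hV 0 h0 v hv
  rw [nodal, ← taylorAlgHom_apply, map_prod]
  refine prod_nbij' (· - v) (· + v) (fun u hu => hV u hu v hv)
    (fun u hu => by simpa using hV u hu _ hneg) (by simp) (by simp) fun u _ => ?_
  simp only [taylorAlgHom_apply, map_sub, taylor_X, taylor_C, id]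
  ring

theorem eq_C_eval_zero_of_taylor_eq [IsDomain R] {f : R[X]}
    (hf : ∀ v ∈ V, taylor v f = f) (hdeg : f.natDegree < #V) : f = C (f.eval 0) := by
  rw [← sub_eq_zero]
  refine eq_zero_of_natDegree_lt_card_of_eval_eq_zero' _ V (fun v hv => ?_)
    (natDegree_sub_C.trans_lt hdeg)
  rw [eval_sub, eval_C, sub_eq_zero]
  calc f.eval v = (taylor v f).eval 0 := by rw [taylor_eval, zero_add]
    _ = f.eval 0 := by rw [hf v hv]

theorem mem_adjoin_nodal_iff [IsDomain R] (hV₀ : V.Nonempty)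
    (hV : ∀ u ∈ V, ∀ v ∈ V, u - v ∈ V) {f : R[X]} :
    f ∈ Algebra.adjoin R {nodal V id} ↔ ∀ v ∈ V, taylor v f = f := by
  refine ⟨fun hf v hv => ?_, fun hf => ?_⟩
  · have hle : Algebra.adjoin R {nodal V id} ≤
        AlgHom.equalizer (taylorAlgHom v) (AlgHom.id R _) :=
      Algebra.adjoin_le (Set.singleton_subset_iff.2 (taylor_nodal_id_of_mem hV hv))
    exact hle hf
  induction hd : f.natDegree using Nat.strong_induction_on generalizing f with
  | _ d ih =>
  have hmonic : (nodal V id).Monic := nodal_monic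
  have hdeg : (nodal V id).natDegree = #V := natDegree_nodal
  have hV₁ : 0 < #V := hV₀.card_pos
  by_cases hlt : f.natDegree < #V
  · rw [eq_C_eval_zero_of_taylor_eq hf hlt]
    exact Subalgebra.algebraMap_mem _ _
  have hinv : ∀ v ∈ V, taylor v (f /ₘ nodal V id) = f /ₘ nodal V id ∧
      taylor v (f %ₘ nodal V id) = f %ₘ nodal V id := by
    intro v hv
    rw [(taylor_divByMonic_and_modByMonic hmonic v f).1,
      (taylor_divByMonic_and_modByMonic hmonic v f).2, hf v hv, taylor_nodal_id_of_mem hV hv]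
    exact ⟨rfl, rfl⟩
  have hrem : (f %ₘ nodal V id).natDegree < #V := by
    rw [← hdeg]
    exact natDegree_modByMonic_lt f hmonic fun h => by simp [h] at hdeg; omega
  rw [← modByMonic_add_div f (nodal V id),
    eq_C_eval_zero_of_taylor_eq (fun v hv => (hinv v hv).2) hrem]
  refine add_mem (Subalgebra.algebraMap_mem _ _)
    (mul_mem (Algebra.subset_adjoin rfl) (ih _ ?_ (fun v hv => (hinv v hv).1) rfl))
  rw [natDegree_divByMonic f hmonic, hdeg]
  omega

end Translations

end Polynomial

namespace MvPolynomial

variable {σ k : Type*} [CommRing k]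

theorem mk_aeval_eq_mk {I : Ideal (MvPolynomial σ k)} {g : σ → MvPolynomial σ k}
    (hg : ∀ v, Ideal.Quotient.mk I (g v) = Ideal.Quotient.mk I (X v)) (f : MvPolynomial σ k) :
    Ideal.Quotient.mk I (aeval g f) = Ideal.Quotient.mk I f :=
  congr($(algHom_ext (f := (Ideal.Quotient.mkₐ k I).comp (aeval g))
    (g := Ideal.Quotient.mkₐ k I) (by simpa using hg)) f)

theorem sum_X_injective [Nontrivial k] :
    Function.Injective fun s : Finset σ => ∑ i ∈ s, (X i : MvPolynomial σ k) := by
  classical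
  intro s t h
  ext i
  have hi := congrArg (coeff (Finsupp.single i 1)) h
  simp only [coeff_sum, coeff_X, sum_ite_eq', Finsupp.single_left_inj one_ne_zero] at hi
  split_ifs at hi with hs ht <;> simp_all

variable (σ k) [Fintype σ]

noncomputable def subsetSums : Finset (MvPolynomial σ k) :=
  open Classical in (univ : Finset σ).powerset.image fun s => ∑ i ∈ s, X i

variable {σ k}

theorem subsetSums_nonempty : (subsetSums σ k).Nonempty := by
  simp [subsetSums]

theorem sub_mem_subsetSums [CharP k 2] {u v : MvPolynomial σ k} (hu : u ∈ subsetSums σ k)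
    (hv : v ∈ subsetSums σ k) : u - v ∈ subsetSums σ k := by
  classical
  obtain ⟨s, -, rfl⟩ := mem_image.1 hu
  obtain ⟨t, -, rfl⟩ := mem_image.1 hv
  exact mem_image.2 ⟨s ∆ t, mem_powerset.2 (subset_univ _),
    by rw [CharTwo.sum_symmDiff, CharTwo.sub_eq_add]⟩

theorem nodal_subsetSums [Nontrivial k] :
    nodal (subsetSums σ k) id =
      ∏ s ∈ (univ : Finset σ).powerset, (Polynomial.X - Polynomial.C (∑ i ∈ s, X i)) := by
  classical
  rw [subsetSums, nodal, prod_image fun s _ t _ h => sum_X_injective h]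
  rfl

theorem forall_taylor_subsetSums_iff [CharP k 2] {f : (MvPolynomial σ k)[X]} :
    (∀ v ∈ subsetSums σ k, Polynomial.taylor v f = f) ↔
      ∀ i, Polynomial.taylor (X i) f = f := by
  classical
  refine ⟨fun h i => ?_, fun h v hv => ?_⟩
  · exact h _ (mem_image.2 ⟨{i}, by simp, sum_singleton _ _⟩)
  · obtain ⟨s, -, rfl⟩ := mem_image.1 hv
    exact Polynomial.taylor_sum_eq_self fun i _ => h i

end MvPolynomial

namespace SumRelation

variable {k : Type*} [CommRing k] {n : ℕ}

variable (k n) in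
noncomputable def elimVar : Fin (n + 1) → MvPolynomial (Fin n) k :=
  Fin.snoc (α := fun _ => MvPolynomial (Fin n) k) X (-∑ i, X i)

variable (k n) in
noncomputable def toPoly :
    MvPolynomial (Fin (n + 1) ⊕ Unit) k →ₐ[k] (MvPolynomial (Fin n) k)[X] :=
  aeval (Sum.elim (fun m => Polynomial.C (elimVar k n m)) fun _ => Polynomial.X)

noncomputable def ofPoly (I : Ideal (MvPolynomial (Fin (n + 1) ⊕ Unit) k)) :
    (MvPolynomial (Fin n) k)[X] →ₐ[k] MvPolynomial (Fin (n + 1) ⊕ Unit) k ⧸ I :=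
  Polynomial.eval₂AlgHom (aeval fun i => Ideal.Quotient.mk I (X (Sum.inl i.castSucc)))
    (Ideal.Quotient.mk I (X (Sum.inr ()))) fun _ => Commute.all _ _

@[simp]
theorem toPoly_X_inl (m : Fin (n + 1)) :
    toPoly k n (X (Sum.inl m)) = Polynomial.C (elimVar k n m) := by
  simp [toPoly]

@[simp]
theorem toPoly_X_inr (u : Unit) : toPoly k n (X (Sum.inr u)) = Polynomial.X := by
  simp [toPoly]

@[simp]
theorem ofPoly_C {I : Ideal (MvPolynomial (Fin (n + 1) ⊕ Unit) k)} (p : MvPolynomial (Fin n) k) :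
    ofPoly I (Polynomial.C p) =
      aeval (fun i => Ideal.Quotient.mk I (X (Sum.inl i.castSucc))) p := by
  simp [ofPoly]

@[simp]
theorem ofPoly_X {I : Ideal (MvPolynomial (Fin (n + 1) ⊕ Unit) k)} :
    ofPoly I Polynomial.X = Ideal.Quotient.mk I (X (Sum.inr ())) := by
  simp [ofPoly]

theorem toPoly_sum_X_inl : toPoly k n (∑ i, X (Sum.inl i)) = 0 := by
  simp [elimVar, Fin.sum_univ_castSucc]

theorem toPoly_prod_powerset [Nontrivial k] :
    toPoly k n (∏ s ∈ (univ : Finset (Fin n)).powerset,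
        (X (Sum.inr ()) - ∑ i ∈ s, X (Sum.inl i.castSucc))) =
      nodal (subsetSums (Fin n) k) id := by
  rw [nodal_subsetSums, map_prod]
  refine prod_congr rfl fun s _ => ?_
  simp [elimVar]

theorem ofPoly_toPoly {I : Ideal (MvPolynomial (Fin (n + 1) ⊕ Unit) k)}
    (hI : ∑ i, X (Sum.inl i) ∈ I) (f : MvPolynomial (Fin (n + 1) ⊕ Unit) k) :
    ofPoly I (toPoly k n f) = Ideal.Quotient.mk I f := by
  suffices (ofPoly I).comp (toPoly k n) = Ideal.Quotient.mkₐ k I from congr($this f)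
  refine algHom_ext ?_
  rintro (m | u)
  · induction m using Fin.lastCases with
    | cast j => simp [elimVar]
    | last =>
      have hsum := Ideal.Quotient.eq_zero_iff_mem.2 hI
      rw [Fin.sum_univ_castSucc, map_add, map_sum] at hsum
      simp [elimVar]
      linear_combination -hsum
  · simp

noncomputable def toPolyQuot {I : Ideal (MvPolynomial (Fin (n + 1) ⊕ Unit) k)}
    (hI : I = Ideal.span {∑ i, X (Sum.inl i)}) :
    MvPolynomial (Fin (n + 1) ⊕ Unit) k ⧸ I →ₐ[k] (MvPolynomial (Fin n) k)[X] :=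
  Ideal.Quotient.liftₐ I (toPoly k n) fun a ha => by
    obtain ⟨c, rfl⟩ := Ideal.mem_span_singleton'.1 (hI ▸ ha)
    rw [map_mul, toPoly_sum_X_inl, mul_zero]

variable {I : Ideal (MvPolynomial (Fin (n + 1) ⊕ Unit) k)}
  (hI : I = Ideal.span {∑ i, X (Sum.inl i)})

theorem toPolyQuot_mk (f : MvPolynomial (Fin (n + 1) ⊕ Unit) k) :
    toPolyQuot hI (Ideal.Quotient.mk I f) = toPoly k n f :=
  rfl

theorem ofPoly_toPolyQuot (y : MvPolynomial (Fin (n + 1) ⊕ Unit) k ⧸ I) :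
    ofPoly I (toPolyQuot hI y) = y := by
  obtain ⟨f, rfl⟩ := Ideal.Quotient.mk_surjective y
  rw [toPolyQuot_mk, ofPoly_toPoly (hI ▸ Ideal.subset_span rfl)]

theorem toPolyQuot_injective : Function.Injective (toPolyQuot hI) :=
  Function.LeftInverse.injective (g := ofPoly I) (ofPoly_toPolyQuot hI)

theorem toPolyQuot_apply_eq_taylor
    {φ : (MvPolynomial (Fin (n + 1) ⊕ Unit) k ⧸ I) →ₐ[k]
      MvPolynomial (Fin (n + 1) ⊕ Unit) k ⧸ I}
    {i : Fin (n + 1)} {σ : Fin (n + 1) ⊕ Unit → MvPolynomial (Fin (n + 1) ⊕ Unit) k}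
    (hφ : ∀ f, φ (Ideal.Quotient.mk I f) = Ideal.Quotient.mk I (aeval σ f))
    (hσ_inl : ∀ m, σ (Sum.inl m) = X (Sum.inl m))
    (hσ_inr : σ (Sum.inr ()) = X (Sum.inr ()) - X (Sum.inl i))
    (y : MvPolynomial (Fin (n + 1) ⊕ Unit) k ⧸ I) :
    toPolyQuot hI (φ y) = Polynomial.taylor (-elimVar k n i) (toPolyQuot hI y) := by
  obtain ⟨f, rfl⟩ := Ideal.Quotient.mk_surjective y
  rw [hφ, toPolyQuot_mk, toPolyQuot_mk]
  suffices (toPoly k n).comp (aeval σ) =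
      ((Polynomial.taylorAlgHom (-elimVar k n i)).restrictScalars k).comp (toPoly k n) from
    congr($this f)
  refine algHom_ext ?_
  rintro (m | ⟨⟩)
  · simp [hσ_inl]
  · simp [hσ_inr, Polynomial.taylor_X, sub_eq_add_neg]

theorem mem_adjoin_iff_toPolyQuot_mem (η : MvPolynomial (Fin (n + 1) ⊕ Unit) k)
    (y : MvPolynomial (Fin (n + 1) ⊕ Unit) k ⧸ I) :
    y ∈ Algebra.adjoin k (insert (Ideal.Quotient.mk I η)
        (Set.range fun m => Ideal.Quotient.mk I (X (Sum.inl m)))) ↔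
      toPolyQuot hI y ∈ Algebra.adjoin (MvPolynomial (Fin n) k) {toPoly k n η} := by
  constructor
  · intro hy
    have hle : Algebra.adjoin k (insert (Ideal.Quotient.mk I η)
        (Set.range fun m => Ideal.Quotient.mk I (X (Sum.inl m)))) ≤
        ((Algebra.adjoin (MvPolynomial (Fin n) k) {toPoly k n η}).restrictScalars k).comap
          (toPolyQuot hI) := by
      rw [Algebra.adjoin_le_iff]
      rintro _ (rfl | ⟨m, rfl⟩)
      · exact Algebra.subset_adjoin rfl
      · show toPoly k n (X (Sum.inl m)) ∈ Algebra.adjoin _ _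
        rw [toPoly_X_inl]
        exact Subalgebra.algebraMap_mem _ _
    exact hle hy
  · intro hy
    rw [← ofPoly_toPolyQuot hI y]
    generalize toPolyQuot hI y = g at hy ⊢
    induction hy using Algebra.adjoin_induction with
    | mem x hx =>
      rw [Set.mem_singleton_iff.1 hx, ofPoly_toPoly (hI ▸ Ideal.subset_span rfl)]
      exact Algebra.subset_adjoin (Set.mem_insert _ _)
    | algebraMap p =>
      rw [Polynomial.algebraMap_eq, ofPoly_C]
      refine Algebra.adjoin_mono (Set.subset_insert _ _) ?_
      refine Algebra.adjoin_mono (Set.range_comp_subset_range Fin.castSucc _) ?_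
      exact (aeval_range _).le (AlgHom.mem_range_self _ p)
    | add x y _ _ hx hy => rw [map_add]; exact add_mem hx hy
    | mul x y _ _ hx hy => rw [map_mul]; exact mul_mem hx hy

theorem forall_taylor_neg_elimVar_iff [CharP k 2] {g : (MvPolynomial (Fin n) k)[X]} :
    (∀ i, Polynomial.taylor (-elimVar k n i) g = g) ↔ ∀ j, Polynomial.taylor (X j) g = g := by
  refine ⟨fun h j => by simpa [elimVar, CharTwo.neg_eq] using h j.castSucc, fun h i => ?_⟩
  induction i using Fin.lastCases with
  | last => simpa [elimVar] using Polynomial.taylor_sum_eq_self fun j _ => h j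
  | cast j => simpa [elimVar, CharTwo.neg_eq] using h j

end SumRelation

open SumRelation in
theorem invariants_of_Er_action
    (k : Type*) [Field k] [CharP k 2] (r : ℕ) (hr : 1 ≤ r)
    (I : Ideal (MvPolynomial (Fin r ⊕ Unit) k))
    (hI : I = Ideal.span ({∑ i : Fin r, X (Sum.inl i)} : Set (MvPolynomial (Fin r ⊕ Unit) k)))
    (φ : Fin r → ((MvPolynomial (Fin r ⊕ Unit) k ⧸ I) →ₐ[k] (MvPolynomial (Fin r ⊕ Unit) k ⧸ I)))
    (hφ : ∀ (i : Fin r) (f : MvPolynomial (Fin r ⊕ Unit) k),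
      φ i (Ideal.Quotient.mk I f) =
        Ideal.Quotient.mk I
          (MvPolynomial.aeval (R := k)
            (fun v : Fin r ⊕ Unit =>
              match v with
              | Sum.inl m => X (Sum.inl m)
              | Sum.inr _ => X (Sum.inr ()) - X (Sum.inl i))
            f))
    (η : MvPolynomial (Fin r ⊕ Unit) k)
    (hη : η = ∏ s ∈ (Finset.univ : Finset (Fin (r - 1))).powerset,
        (X (Sum.inr ()) - ∑ i ∈ s, X (Sum.inl (Fin.castLE (Nat.sub_le r 1) i)))) :
    (∀ f : MvPolynomial (Fin r ⊕ Unit) k,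
        Ideal.Quotient.mk I
            (MvPolynomial.aeval (R := k)
              (fun v : Fin r ⊕ Unit =>
                match v with
                | Sum.inl m => X (Sum.inl m)
                | Sum.inr _ => X (Sum.inr ()) - ∑ i : Fin r, X (Sum.inl i))
              f) =
          Ideal.Quotient.mk I f) ∧
      ∀ y : MvPolynomial (Fin r ⊕ Unit) k ⧸ I,
        (∀ i : Fin r, φ i y = y) ↔
          y ∈ Algebra.adjoin k
            (insert (Ideal.Quotient.mk I η)
              (Set.range fun m : Fin r => Ideal.Quotient.mk I (X (Sum.inl m)))) := by
  obtain ⟨n, rfl⟩ : ∃ n, r = n + 1 := ⟨r - 1, by omega⟩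
  have hsum : ∑ i, X (Sum.inl i) ∈ I := hI ▸ Ideal.subset_span rfl
  refine ⟨mk_aeval_eq_mk ?_, fun y => ?_⟩
  · rintro (m | u)
    · rfl
    · rw [map_sub, Ideal.Quotient.eq_zero_iff_mem.2 hsum, sub_zero]
  -- `Fin.castLE (Nat.sub_le (n + 1) 1)` is `Fin.castSucc` by definition
  have hη' : toPoly k n η = nodal (subsetSums (Fin n) k) id := hη ▸ toPoly_prod_powerset
  rw [mem_adjoin_iff_toPolyQuot_mem hI, hη',
    Polynomial.mem_adjoin_nodal_iff subsetSums_nonempty fun _ hu _ hv => sub_mem_subsetSums hu hv,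
    forall_taylor_subsetSums_iff, ← forall_taylor_neg_elimVar_iff]
  exact forall_congr' fun i => by
    rw [← (toPolyQuot_injective hI).eq_iff,
      toPolyQuot_apply_eq_taylor hI (hφ i) (fun _ => rfl) rfl]
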